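/- arXiv:math/0602207 — 3 statements merged into one kernel-verified Lean document; each statement's English description precedes it below -/
import Mathlib

section
/- If a sequence of complex numbers (a_k) satisfies ∑_{n≥1} (√(∑_{k≥n} |a_k|²))/(n √(log n)) < ∞, then ∑_{k≥1} 2^{k/2} (∑_{l=2^{2^k}+1}^{2^{2^{k+1}}} |a_l|²)^{1/2} < ∞. -/
open Finset Real

/-!
On the block `N < n ≤ N'` with `N' = N²`, the tail `T n = ∑_{k ≥ n} |a_k|²` is at least `T N'` and
`log n ≤ log N'`, while comparison with `∫ dx / x` gives `∑ 1/n ≥ log N' / 4` over the block. So the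
block of the hypothesis series dominates `√(log N') √(T N') / 4`; for `N' = 2^2^k` this is
`2^(k/2) √(log 2) √(T N') / 4`, and the `k`-th term of the conclusion is at most `2^(k/2) √(T N')`.
-/

theorem log_add_one_sub_log_add_one_le_sum_Ioc_inv {M N : ℕ} (h : M ≤ N) :
    log (N + 1) - log (M + 1) ≤ ∑ n ∈ Ioc M N, (n : ℝ)⁻¹ := by
  have hM : (0 : ℝ) < M + 1 := by positivity
  calc log (N + 1) - log (M + 1) = ∫ x in ((M + 1 : ℕ) : ℝ)..((N + 1 : ℕ) : ℝ), x⁻¹ := by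
        rw [integral_inv_of_pos (by positivity) (by positivity)]
        push_cast
        rw [log_div (by positivity) hM.ne']
    _ ≤ ∑ n ∈ Ico (M + 1) (N + 1), (n : ℝ)⁻¹ :=
        (inv_antitoneOn_Icc_right (by push_cast; exact hM)).integral_le_sum_Ico (by omega)
    _ = ∑ n ∈ Ioc M N, (n : ℝ)⁻¹ := by rw [Ico_add_one_add_one_eq_Ioc]

theorem log_div_four_le_sum_Ioc_inv {M N : ℕ} (hM : 4 ≤ M) (hMN : M ^ 2 ≤ N) :
    log N / 4 ≤ ∑ n ∈ Ioc M N, (n : ℝ)⁻¹ := by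
  have hM' : (4 : ℝ) ≤ M := by exact_mod_cast hM
  have hMN' : (M : ℝ) ^ 2 ≤ N := by exact_mod_cast hMN
  have hlogM : 2 * log 2 ≤ log M := by
    rw [← log_rpow two_pos]
    exact log_le_log (by norm_num) (by norm_num; linarith)
  have hlogN : 2 * log M ≤ log N := by
    have := log_le_log (by positivity) hMN'
    rwa [log_pow, Nat.cast_ofNat] at this
  have hN : log N ≤ log (N + 1) := log_le_log (by nlinarith) (by linarith)
  have hM1 : log (M + 1) ≤ log 2 + log M := by
    rw [← log_mul two_ne_zero (by positivity)]
    exact log_le_log (by positivity) (by linarith)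
  linarith [log_add_one_sub_log_add_one_le_sum_Ioc_inv (M := M) (N := N) (by nlinarith)]

theorem sqrt_log_mul_sqrt_le_four_mul_sum_Ioc {T : ℕ → ℝ} (hT : Antitone T) {M N : ℕ}
    (hM : 4 ≤ M) (hMN : M ^ 2 ≤ N) :
    √(log N) * √(T N) ≤ 4 * ∑ n ∈ Ioc M N, √(T n) / (n * √(log n)) := by
  have hN : (4 : ℝ) ≤ N := by exact_mod_cast hM.trans (Nat.le_self_pow two_ne_zero M |>.trans hMN)
  have hlogN : 0 < log N := log_pos (by linarith)
  have hterm : ∀ n ∈ Ioc M N, √(T N) / √(log N) * (n : ℝ)⁻¹ ≤ √(T n) / (n * √(log n)) := by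
    intro n hn
    obtain ⟨hMn, hnN⟩ := mem_Ioc.mp hn
    have hn : (4 : ℝ) < n := by exact_mod_cast hM.trans_lt hMn
    have hlogn : 0 < log n := log_pos (by linarith)
    rw [← div_eq_mul_inv, div_div, mul_comm (√(log N))]
    gcongr
    exact hT hnN
  calc √(log N) * √(T N) = 4 * (√(T N) / √(log N) * (log N / 4)) := by
        field_simp
        rw [sq_sqrt hlogN.le, mul_comm]
    _ ≤ 4 * (√(T N) / √(log N) * ∑ n ∈ Ioc M N, (n : ℝ)⁻¹) := by
        gcongr
        exact log_div_four_le_sum_Ioc_inv hM hMN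
    _ ≤ 4 * ∑ n ∈ Ioc M N, √(T n) / (n * √(log n)) := by
        rw [mul_sum]
        gcongr with n hn
        exact hterm n hn

theorem antitone_tsum_ge {f : ℕ → ℝ} (hf : Summable f) (hf0 : 0 ≤ f) :
    Antitone fun n => ∑' k : {k : ℕ // n ≤ k}, f k := fun _ _ hmn =>
  Summable.tsum_le_tsum_of_inj (fun k => ⟨k.1, hmn.trans k.2⟩)
    (fun _ _ h => by simpa [Subtype.ext_iff] using h) (fun _ _ => hf0 _) (fun _ => le_rfl)
    (hf.comp_injective Subtype.val_injective) (hf.comp_injective Subtype.val_injective)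

theorem sum_le_tsum_ge {f : ℕ → ℝ} (hf : Summable f) (hf0 : 0 ≤ f) {n : ℕ} {s : Finset ℕ}
    (hs : ∀ l ∈ s, n ≤ l) : ∑ l ∈ s, f l ≤ ∑' k : {k : ℕ // n ≤ k}, f k := by
  rw [← sum_subtype_of_mem f hs]
  exact (hf.comp_injective Subtype.val_injective).sum_le_tsum _ (fun _ _ => hf0 _)

theorem Summable.sum_Ioc_of_monotone {f : ℕ → ℝ} (hf : Summable f) (hf0 : 0 ≤ f) {M : ℕ → ℕ}
    (hM : Monotone M) : Summable fun k => ∑ n ∈ Ioc (M k) (M (k + 1)), f n := by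
  refine summable_of_sum_range_le (c := ∑' n, f n) (fun k => sum_nonneg fun n _ => hf0 n)
    fun K => ?_
  have htelescope : ∑ k ∈ range K, ∑ n ∈ Ioc (M k) (M (k + 1)), f n
      = ∑ n ∈ Ioc (M 0) (M K), f n := by
    induction K with
    | zero => simp
    | succ K ih =>
      rw [sum_range_succ, ih, sum_Ioc_consecutive _ (hM K.zero_le) (hM K.le_succ)]
  rw [htelescope]
  exact hf.sum_le_tsum _ fun n _ => hf0 n

theorem sqrt_log_two_pow_two_pow (k : ℕ) :
    √(log ((2 ^ 2 ^ k : ℕ) : ℝ)) = 2 ^ ((k : ℝ) / 2) * √(log 2) := by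
  rw [Nat.cast_pow, Nat.cast_ofNat, log_pow, sqrt_mul (by positivity), sqrt_eq_rpow,
    Nat.cast_pow, Nat.cast_ofNat, ← rpow_natCast, ← rpow_mul zero_le_two, mul_one_div]

theorem stmt_0 (a : ℕ → ℂ) (hsq : Summable fun k => ‖a k‖ ^ 2)
    (h : Summable fun n : ℕ =>
      Real.sqrt (∑' k : {k : ℕ // n ≤ k}, ‖a k.1‖ ^ 2) / ((n : ℝ) * Real.sqrt (Real.log n))) :
    Summable fun k : ℕ =>
      (2 : ℝ) ^ ((k : ℝ) / 2) *
        Real.sqrt (∑ l ∈ Finset.Icc (2 ^ (2 ^ k) + 1) (2 ^ (2 ^ (k + 1))), ‖a l‖ ^ 2) := by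
  set T := fun n : ℕ => ∑' k : {k : ℕ // n ≤ k}, ‖a k.1‖ ^ 2
  have hsq0 : 0 ≤ fun k => ‖a k‖ ^ 2 := fun _ => by positivity
  have hblocks := h.sum_Ioc_of_monotone (fun _ => by positivity) (M := fun j => 2 ^ 2 ^ j)
    fun _ _ hij => Nat.pow_le_pow_right two_pos (Nat.pow_le_pow_right two_pos hij)
  have hlog2 : 0 < √(log 2) := sqrt_pos.mpr (log_pos one_lt_two)
  refine (summable_nat_add_iff 2).mp <| Summable.of_nonneg_of_le (fun _ => by positivity)
    (fun k => ?_) (((summable_nat_add_iff 1).mpr hblocks).mul_left (4 / √(log 2)))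
  have hblock := sqrt_log_mul_sqrt_le_four_mul_sum_Ioc (antitone_tsum_ge hsq hsq0)
    (M := 2 ^ 2 ^ (k + 1)) (N := 2 ^ 2 ^ (k + 2))
    (by calc 4 = 2 ^ 2 ^ 1 := rfl
      _ ≤ 2 ^ 2 ^ (k + 1) := by gcongr <;> omega)
    (by rw [← pow_mul, ← pow_succ])
  rw [sqrt_log_two_pow_two_pow] at hblock
  calc (2 : ℝ) ^ (((k + 2 : ℕ) : ℝ) / 2) *
        √(∑ l ∈ Icc (2 ^ 2 ^ (k + 2) + 1) (2 ^ 2 ^ (k + 2 + 1)), ‖a l‖ ^ 2)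
      ≤ 2 ^ (((k + 2 : ℕ) : ℝ) / 2) * √(T (2 ^ 2 ^ (k + 2))) := by
        gcongr
        exact sum_le_tsum_ge hsq hsq0 fun l hl => by linarith [(mem_Icc.mp hl).1]
    _ ≤ 4 / √(log 2) * ∑ n ∈ Ioc (2 ^ 2 ^ (k + 1)) (2 ^ 2 ^ (k + 1 + 1)),
          √(T n) / (n * √(log n)) := by
        rw [div_mul_eq_mul_div, le_div_iff₀ hlog2]
        linarith
end

section
/- Let (X_N)_{N≥1} be random variables with E|X_N|^β = O(N^d) for some β, d > 0, and set Φ_β(N) = 2 + max(N, E|X_N|^β). Then E[sup_{N≥1} √(log⁺|X_N| / log Φ_β(N))] < ∞. -/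
open MeasureTheory Real ENNReal

/-!
Write `log⁺ x ≤ (3 log Φ + x^β / Φ^3) / β` (split `x^β = (x^β / Φ^3) Φ^3` and use `log⁺ y ≤ y`).
Dividing by `log Φ ≥ log 2` and using `√t ≤ 1 + t`, the `N`-th term of the supremum is at most
`1 + 3/β + |X_N|^β / (β log 2 Φ(N)^3)`, so the supremum is dominated by `1 + 3/β` plus the sum of
these nonnegative random variables. Their expectations are at most `1 / (β log 2 Φ(N)^2)` because
`E|X_N|^β ≤ Φ(N)`, and these are summable because `Φ(N) ≥ N + 2`.
-/

namespace Real

lemma sqrt_le_one_add_self {t : ℝ} (ht : 0 ≤ t) : √t ≤ 1 + t :=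
  (sqrt_le_left (by linarith)).mpr (by nlinarith)

lemma posLog_le_self {x : ℝ} (hx : 0 ≤ x) : log⁺ x ≤ x :=
  max_le hx (log_le_self hx)

lemma posLog_rpow {x β : ℝ} (hx : 0 ≤ x) (hβ : 0 ≤ β) : log⁺ (x ^ β) = β * log⁺ x := by
  rcases hx.eq_or_lt with rfl | hx
  · rcases hβ.eq_or_lt with rfl | hβ
    · simp
    · simp [zero_rpow hβ.ne']
  · rw [posLog_apply, posLog_apply, log_rpow hx, mul_max_of_nonneg _ _ hβ, mul_zero]

lemma mul_posLog_le {x Φ β : ℝ} (hx : 0 ≤ x) (hβ : 0 ≤ β) (hΦ : 1 ≤ Φ) (p : ℕ) :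
    β * log⁺ x ≤ x ^ β / Φ ^ p + p * log Φ := by
  have hΦp : Φ ^ p ≠ 0 := pow_ne_zero _ (by linarith)
  calc β * log⁺ x = log⁺ (x ^ β / Φ ^ p * Φ ^ p) := by
        rw [div_mul_cancel₀ _ hΦp, posLog_rpow hx hβ]
    _ ≤ log⁺ (x ^ β / Φ ^ p) + log⁺ (Φ ^ p) := posLog_mul
    _ ≤ x ^ β / Φ ^ p + p * log Φ := by
        rw [posLog_pow, posLog_eq_log (x := Φ) (by rwa [abs_of_nonneg (by linarith)])]
        gcongr
        exact posLog_le_self (by positivity)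

lemma sqrt_posLog_div_log_le {x Φ β : ℝ} (hx : 0 ≤ x) (hβ : 0 < β) (hΦ : 2 ≤ Φ) (p : ℕ) :
    √(log⁺ x / log Φ) ≤ 1 + p / β + x ^ β / (β * log 2 * Φ ^ p) := by
  have hlog2 : 0 < log 2 := log_pos one_lt_two
  have hlogΦ : log 2 ≤ log Φ := log_le_log two_pos hΦ
  have hlogΦpos : 0 < log Φ := hlog2.trans_le hlogΦ
  have hbound : log⁺ x / log Φ ≤ p / β + x ^ β / (β * log 2 * Φ ^ p) :=
    calc log⁺ x / log Φ = (β * log⁺ x) / (β * log Φ) := (mul_div_mul_left _ _ hβ.ne').symm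
      _ ≤ (x ^ β / Φ ^ p + p * log Φ) / (β * log Φ) := by
          gcongr; exact mul_posLog_le hx hβ.le (by linarith) p
      _ = p / β + x ^ β / Φ ^ p / (β * log Φ) := by
          rw [add_div, mul_div_mul_right _ _ hlogΦpos.ne', add_comm]
      _ ≤ p / β + x ^ β / (β * log 2 * Φ ^ p) := by
          rw [div_div, mul_comm (Φ ^ p)]
          gcongr
  exact (sqrt_le_one_add_self (div_nonneg posLog_nonneg hlogΦpos.le)).trans (by linarith)

end Real

lemma summable_one_div_sq_of_nat_add_one_le {Φ : ℕ → ℝ} (hΦ : ∀ N : ℕ, (N : ℝ) + 1 ≤ Φ N) :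
    Summable fun N => 1 / Φ N ^ 2 := by
  have hsum : Summable fun N : ℕ => 1 / ((N : ℝ) + 1) ^ 2 := by
    simpa using (summable_nat_add_iff 1).mpr (Real.summable_one_div_nat_pow.mpr one_lt_two)
  refine hsum.of_nonneg_of_le (fun N => by positivity) fun N => ?_
  gcongr
  exact hΦ N

namespace MeasureTheory

variable {Ω : Type*} [MeasurableSpace Ω] {μ : Measure Ω}

lemma lintegral_iSup_le_add_tsum {ι κ : Type*} [Countable κ] {f : ι → Ω → ℝ≥0∞}
    {g : κ → Ω → ℝ≥0∞} (c : ℝ≥0∞) (hg : ∀ j, AEMeasurable (g j) μ)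
    (hfg : ∀ i, ∃ j, ∀ ω, f i ω ≤ c + g j ω) :
    ∫⁻ ω, ⨆ i, f i ω ∂μ ≤ c * μ Set.univ + ∑' j, ∫⁻ ω, g j ω ∂μ := by
  have hpt : ∀ ω, ⨆ i, f i ω ≤ c + ∑' j, g j ω := fun ω => iSup_le fun i => by
    obtain ⟨j, hj⟩ := hfg i
    exact (hj ω).trans (by gcongr; exact ENNReal.le_tsum j)
  calc ∫⁻ ω, ⨆ i, f i ω ∂μ ≤ ∫⁻ ω, c + ∑' j, g j ω ∂μ := lintegral_mono hpt
    _ = c * μ Set.univ + ∑' j, ∫⁻ ω, g j ω ∂μ := by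
        rw [lintegral_add_left measurable_const, lintegral_const, lintegral_tsum hg]

lemma tsum_lintegral_ofReal_div_mul_pow_three_lt_top {f : ℕ → Ω → ℝ} {Φ : ℕ → ℝ} {c : ℝ}
    (hc : 0 < c) (hf : ∀ N, Integrable (f N) μ) (hf_nonneg : ∀ N ω, 0 ≤ f N ω)
    (hfΦ : ∀ N, ∫ ω, f N ω ∂μ ≤ Φ N) (hΦ : ∀ N : ℕ, (N : ℝ) + 1 ≤ Φ N) :
    ∑' N, ∫⁻ ω, ENNReal.ofReal (f N ω / (c * Φ N ^ 3)) ∂μ < ⊤ := by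
  have hΦpos : ∀ N, 0 < Φ N := fun N => by linarith [hΦ N, (N.cast_nonneg : (0 : ℝ) ≤ N)]
  have hterm : ∀ N, ∫⁻ ω, ENNReal.ofReal (f N ω / (c * Φ N ^ 3)) ∂μ ≤
      ENNReal.ofReal (c⁻¹ * (1 / Φ N ^ 2)) := fun N => by
    have := hΦpos N
    rw [← ofReal_integral_eq_lintegral_ofReal ((hf N).div_const _)
      (.of_forall fun ω => div_nonneg (hf_nonneg N ω) (by positivity)), integral_div]
    refine ENNReal.ofReal_le_ofReal ?_
    calc (∫ ω, f N ω ∂μ) / (c * Φ N ^ 3) ≤ Φ N / (c * Φ N ^ 3) := by gcongr; exact hfΦ N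
      _ = c⁻¹ * (1 / Φ N ^ 2) := by field_simp
  have hsum := (summable_one_div_sq_of_nat_add_one_le hΦ).mul_left c⁻¹
  calc ∑' N, ∫⁻ ω, ENNReal.ofReal (f N ω / (c * Φ N ^ 3)) ∂μ
      ≤ ∑' N, ENNReal.ofReal (c⁻¹ * (1 / Φ N ^ 2)) := ENNReal.tsum_le_tsum hterm
    _ = ENNReal.ofReal (∑' N, c⁻¹ * (1 / Φ N ^ 2)) :=
        (ENNReal.ofReal_tsum_of_nonneg (fun N => by have := hΦpos N; positivity) hsum).symm
    _ < ⊤ := ENNReal.ofReal_lt_top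

end MeasureTheory

theorem stmt_11_general {Ω : Type*} [MeasurableSpace Ω] (μ : Measure Ω) [IsProbabilityMeasure μ]
    (X : ℕ → Ω → ℝ) (β : ℝ) (hβ : 0 < β)
    (hint : ∀ N : ℕ, Integrable (fun ω => |X N ω| ^ β) μ)
    (Φ : ℕ → ℝ)
    (hΦ : ∀ N : ℕ, Φ N = 2 + max (N : ℝ) (∫ ω, |X N ω| ^ β ∂μ)) :
    ∫⁻ ω, ⨆ N : {n : ℕ // 1 ≤ n},
        ENNReal.ofReal
          (Real.sqrt (max (Real.log |X N.1 ω|) 0 / Real.log (Φ N.1))) ∂μ < ⊤ := by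
  have hΦN : ∀ N : ℕ, (N : ℝ) + 2 ≤ Φ N := fun N => by
    rw [hΦ]; linarith [le_max_left (N : ℝ) (∫ ω, |X N ω| ^ β ∂μ)]
  have hΦ2 : ∀ N : ℕ, 2 ≤ Φ N := fun N => by linarith [hΦN N, (N.cast_nonneg : (0 : ℝ) ≤ N)]
  have hΦE : ∀ N : ℕ, ∫ ω, |X N ω| ^ β ∂μ ≤ Φ N := fun N => by
    rw [hΦ]; linarith [le_max_right (N : ℝ) (∫ ω, |X N ω| ^ β ∂μ)]
  have hc : 0 < β * Real.log 2 := mul_pos hβ (log_pos one_lt_two)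
  have hbound : ∀ N : {n : ℕ // 1 ≤ n}, ∀ ω,
      ENNReal.ofReal (√(max (Real.log |X N.1 ω|) 0 / Real.log (Φ N.1))) ≤
        ENNReal.ofReal (1 + 3 / β) +
          ENNReal.ofReal (|X N.1 ω| ^ β / (β * Real.log 2 * Φ N.1 ^ 3)) := fun N ω => by
    have := hΦ2 N.1
    rw [max_comm, ← posLog_apply, ← ENNReal.ofReal_add (by positivity) (by positivity)]
    exact ENNReal.ofReal_le_ofReal
      ((sqrt_posLog_div_log_le (abs_nonneg _) hβ (hΦ2 N.1) 3).trans_eq (by norm_num))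
  have hg : ∀ N, AEMeasurable
      (fun ω => ENNReal.ofReal (|X N ω| ^ β / (β * Real.log 2 * Φ N ^ 3))) μ := fun N =>
    ((hint N).div_const (β * Real.log 2 * Φ N ^ 3)).aemeasurable.ennreal_ofReal
  refine (lintegral_iSup_le_add_tsum (ENNReal.ofReal (1 + 3 / β)) hg ?_).trans_lt
    (ENNReal.add_lt_top.mpr ⟨ENNReal.mul_lt_top ofReal_lt_top (measure_lt_top μ _), ?_⟩)
  · exact fun N => ⟨N.1, hbound N⟩
  · exact tsum_lintegral_ofReal_div_mul_pow_three_lt_top hc hint (fun N ω => by positivity) hΦE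
      fun N => by linarith [hΦN N]

theorem stmt_11 {Ω : Type*} [MeasurableSpace Ω] (μ : Measure Ω) [IsProbabilityMeasure μ]
    (X : ℕ → Ω → ℝ) (β d : ℝ) (hβ : 0 < β) (hd : 0 < d)
    (hint : ∀ N : ℕ, Integrable (fun ω => |X N ω| ^ β) μ)
    (hO : ∃ C : ℝ, ∀ N : ℕ, 1 ≤ N → ∫ ω, |X N ω| ^ β ∂μ ≤ C * (N : ℝ) ^ d)
    (Φ : ℕ → ℝ)
    (hΦ : ∀ N : ℕ, Φ N = 2 + max (N : ℝ) (∫ ω, |X N ω| ^ β ∂μ)) :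
    ∫⁻ ω, ⨆ N : {n : ℕ // 1 ≤ n},
        ENNReal.ofReal
          (Real.sqrt (max (Real.log |X N.1 ω|) 0 / Real.log (Φ N.1))) ∂μ < ⊤ :=
  stmt_11_general μ X β hβ hint Φ hΦ
end

section
/- Let X be a real random variable with characteristic function φ(t) = E[e^{2iπ tX}] satisfying φ(t)=1 iff t=0 and sup_t |t|^δ|φ(t)| = q < ∞ for some δ > 0. Let K be a compact subset of ℝ with dist(0,K) = 2ε > 0. Then sup_{N≥1} sup_{t∈K} sup_{j∈ℤ, j≠0} |∑_{k=1}^N φ(jt)^k| < ∞. -/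
/-!
Since `φ(s) = φ_X(2πs)` is a characteristic function, it is continuous with `‖φ‖ ≤ 1`, and the
decay `|s|^δ ‖φ(s)‖ ≤ q` forces `φ → 0` at infinity. Hence `‖1 - φ‖` is continuous, positive on
the closed set `{|s| ≥ 2ε}` and at least `1/2` outside a compact set, so it is bounded below there
by some `c > 0`. For `t ∈ K` and `j ≠ 0` we have `|jt| ≥ 2ε`, and the geometric sum
`∑_{k=1}^N z^k` with `‖z‖ ≤ 1` has norm at most `2 / ‖1 - z‖ ≤ 2 / c`.
-/

open MeasureTheory Real Complex Finset
open Filter Topology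

lemma norm_sum_Icc_pow_le {𝕜 : Type*} [NormedDivisionRing 𝕜] {z : 𝕜} (hz : ‖z‖ ≤ 1) (hz1 : z ≠ 1)
    (N : ℕ) : ‖∑ k ∈ Icc 1 N, z ^ k‖ ≤ 2 / ‖1 - z‖ := by
  have hsum : (∑ k ∈ Icc 1 N, z ^ k) * (1 - z) = z - z ^ (N + 1) := by
    have hshift : ∑ k ∈ Icc 1 N, z ^ k = z * ∑ i ∈ range N, z ^ i := by
      rw [← Ico_add_one_right_eq_Icc, sum_Ico_eq_sum_range, mul_sum, add_tsub_cancel_right]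
      simp only [add_comm 1, pow_succ']
    rw [hshift, mul_assoc, geom_sum_mul_neg, mul_sub, mul_one, ← pow_succ']
  rw [le_div_iff₀ (norm_pos_iff.2 (sub_ne_zero.2 hz1.symm)), ← norm_mul, hsum]
  calc ‖z - z ^ (N + 1)‖ ≤ ‖z‖ + ‖z ^ (N + 1)‖ := norm_sub_le _ _
    _ ≤ 1 + 1 := add_le_add hz (by rw [norm_pow]; exact pow_le_one₀ (norm_nonneg z) hz)
    _ = 2 := one_add_one_eq_two

lemma tendsto_cocompact_zero_of_rpow_mul_norm_le {E : Type*} [NormedAddCommGroup E] {f : ℝ → E}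
    {δ q : ℝ} (hδ : 0 < δ) (h : ∀ t, |t| ^ δ * ‖f t‖ ≤ q) : Tendsto f (cocompact ℝ) (𝓝 0) := by
  have hdecay : Tendsto (fun t : ℝ => q * ‖t‖ ^ (-δ)) (cocompact ℝ) (𝓝 0) := by
    simpa using
      ((tendsto_rpow_neg_atTop hδ).comp (tendsto_norm_cocompact_atTop (E := ℝ))).const_mul q
  refine squeeze_zero_norm' ?_ hdecay
  filter_upwards [(tendsto_norm_cocompact_atTop (E := ℝ)).eventually_gt_atTop 0] with t ht
  rw [rpow_neg (norm_nonneg t), ← div_eq_mul_inv, le_div_iff₀' (rpow_pos_of_pos ht δ)]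
  exact h t

theorem IsClosed.exists_pos_forall_le {α : Type*} [TopologicalSpace α] {f : α → ℝ}
    (hf : Continuous f) {S : Set α} (hS : IsClosed S) (hpos : ∀ x ∈ S, 0 < f x) {c₀ : ℝ}
    (hc₀ : 0 < c₀) (hfar : ∀ᶠ x in cocompact α, c₀ ≤ f x) : ∃ c > 0, ∀ x ∈ S, c ≤ f x := by
  obtain ⟨L, hL, hLfar⟩ := mem_cocompact.1 hfar
  obtain ⟨c, hc, hcL⟩ := (hL.inter_right hS).exists_forall_le' hf.continuousOn
    fun x hx => hpos x hx.2
  refine ⟨min c c₀, lt_min hc hc₀, fun x hx => ?_⟩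
  by_cases hxL : x ∈ L
  · exact (min_le_left _ _).trans (hcL x ⟨hxL, hx⟩)
  · exact (min_le_right _ _).trans (hLfar hxL)

lemma charFun_map_real {Ω : Type*} [MeasurableSpace Ω] {μ : Measure Ω} {X : Ω → ℝ}
    (hX : AEMeasurable X μ) (t : ℝ) : charFun (μ.map X) t = ∫ ω, Complex.exp (t * X ω * I) ∂μ := by
  rw [charFun_apply_real, integral_map hX (by fun_prop)]

theorem stmt_13_general {Ω : Type*} [MeasurableSpace Ω] (μ : Measure Ω) [IsProbabilityMeasure μ]
    (X : Ω → ℝ) (hX : Measurable X) (φ : ℝ → ℂ)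
    (hφ : ∀ t : ℝ, φ t = ∫ ω, Complex.exp (2 * π * Complex.I * t * X ω) ∂μ)
    (h1 : ∀ t : ℝ, φ t = 1 ↔ t = 0)
    (δ q : ℝ) (hδ : 0 < δ)
    (h2 : ∀ t : ℝ, |t| ^ δ * ‖φ t‖ ≤ q)
    (K : Set ℝ) (ε : ℝ) (hε : 0 < ε)
    (hdist : ∀ t ∈ K, 2 * ε ≤ |t|) :
    ∃ C : ℝ, ∀ N : ℕ, 1 ≤ N → ∀ t ∈ K, ∀ j : ℤ, j ≠ 0 →
      ‖∑ k ∈ Finset.Icc 1 N, (φ (j * t)) ^ k‖ ≤ C := by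
  have := Measure.isProbabilityMeasure_map (μ := μ) hX.aemeasurable
  have hφ_charFun : φ = fun t => charFun (μ.map X) (2 * π * t) := by
    ext1 t
    rw [hφ, charFun_map_real hX.aemeasurable]
    congr 1 with ω
    push_cast
    ring_nf
  have hcont : Continuous φ := hφ_charFun ▸ by fun_prop
  have hnorm_le : ∀ s, ‖φ s‖ ≤ 1 := fun s => hφ_charFun ▸ norm_charFun_le_one _
  have hne : ∀ s, 2 * ε ≤ |s| → φ s ≠ 1 := fun s hs h => by
    rw [(h1 s).1 h, abs_zero] at hs
    linarith
  have hfar : ∀ᶠ s in cocompact ℝ, 1 / 2 ≤ ‖1 - φ s‖ := by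
    have := ((tendsto_cocompact_zero_of_rpow_mul_norm_le hδ h2).const_sub 1).norm
    rw [sub_zero, norm_one] at this
    exact this.eventually (le_mem_nhds (by norm_num))
  obtain ⟨c, hc, hcS⟩ := (isClosed_le continuous_const continuous_abs).exists_pos_forall_le
    (continuous_const.sub hcont).norm
    (fun s hs => norm_pos_iff.2 (sub_ne_zero.2 (hne s hs).symm)) one_half_pos hfar
  refine ⟨2 / c, fun N _ t ht j hj => ?_⟩
  have hjt : 2 * ε ≤ |(j : ℝ) * t| := by
    rw [abs_mul]
    have hj_abs : (1 : ℝ) ≤ |(j : ℝ)| := by exact_mod_cast Int.one_le_abs hj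
    exact (hdist t ht).trans (le_mul_of_one_le_left (abs_nonneg t) hj_abs)
  calc ‖∑ k ∈ Icc 1 N, φ (j * t) ^ k‖ ≤ 2 / ‖1 - φ (j * t)‖ :=
        norm_sum_Icc_pow_le (hnorm_le _) (hne _ hjt) N
    _ ≤ 2 / c := div_le_div_of_nonneg_left zero_le_two hc (hcS _ hjt)

theorem stmt_13 {Ω : Type*} [MeasurableSpace Ω] (μ : Measure Ω) [IsProbabilityMeasure μ]
    (X : Ω → ℝ) (hX : Measurable X) (φ : ℝ → ℂ)
    (hφ : ∀ t : ℝ, φ t = ∫ ω, Complex.exp (2 * π * Complex.I * t * X ω) ∂μ)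
    (h1 : ∀ t : ℝ, φ t = 1 ↔ t = 0)
    (δ q : ℝ) (hδ : 0 < δ)
    (h2 : ∀ t : ℝ, |t| ^ δ * ‖φ t‖ ≤ q)
    (K : Set ℝ) (hK : IsCompact K) (ε : ℝ) (hε : 0 < ε)
    (hdist : ∀ t ∈ K, 2 * ε ≤ |t|) :
    ∃ C : ℝ, ∀ N : ℕ, 1 ≤ N → ∀ t ∈ K, ∀ j : ℤ, j ≠ 0 →
      ‖∑ k ∈ Finset.Icc 1 N, (φ (j * t)) ^ k‖ ≤ C :=
  stmt_13_general μ X hX φ hφ h1 δ q hδ h2 K ε hε hdist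
end
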